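/- Let β₁ > 0, β₂ < −2√β₁, and set ρ₁ = √((−β₂ − √(β₂² − 4β₁))/2), ρ₂ = √((−β₂ + √(β₂² − 4β₁))/2). Let z : ℝ → ℂ be differentiable with z′(t) = (β₁ + i) z(t) + β₂ z(t)|z(t)|² + z(t)|z(t)|⁴ for all t, and let a < b. If 0 < |z(t)| < ρ₁ for all t ∈ [a,b], then |z(b)| > |z(a)|; likewise, if |z(t)| > ρ₂ for all t ∈ [a,b], then |z(b)| > |z(a)|. -/

import Mathlib

/-!
Writing the vector field as `z * (β₁ + β₂ |z|² + |z|⁴ + i)` shows that `|z|²` has derivative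
`2 |z|² (β₁ + β₂ |z|² + |z|⁴)`. The second factor is `β₁ + β₂ x + x²` at `x = |z|²`, whose roots
`ρ₁² ≤ ρ₂²` are real because `β₂ < -2√β₁` forces `4β₁ ≤ β₂²`, so it is positive when
`|z| < ρ₁` or `|z| > ρ₂`; there `|z|²` is strictly increasing.
-/

open Complex Set

lemma hasDerivAt_norm_sq_of_hasDerivAt_mul {z : ℝ → ℂ} {w : ℂ} {t : ℝ}
    (hz : HasDerivAt z (z t * w) t) :
    HasDerivAt (fun s => ‖z s‖ ^ 2) (2 * ‖z t‖ ^ 2 * w.re) t := by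
  convert hz.norm_sq using 1
  rw [Complex.inner, mul_right_comm (z t), Complex.mul_conj', ← ofReal_pow, re_ofReal_mul]
  ring

lemma norm_lt_norm_of_hasDerivAt_mul {z w : ℝ → ℂ} (hz : ∀ t, HasDerivAt z (z t * w t) t)
    {a b : ℝ} (hab : a < b) (hpos : ∀ t ∈ Ioo a b, 0 < ‖z t‖ ∧ 0 < (w t).re) :
    ‖z a‖ < ‖z b‖ := by
  have hderiv t := hasDerivAt_norm_sq_of_hasDerivAt_mul (hz t)
  have hmono : StrictMonoOn (fun s => ‖z s‖ ^ 2) (Icc a b) := by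
    refine strictMonoOn_of_hasDerivWithinAt_pos (convex_Icc a b)
      (fun t _ => (hderiv t).continuousAt.continuousWithinAt)
      (fun t _ => (hderiv t).hasDerivWithinAt) fun t ht => ?_
    rw [interior_Icc] at ht
    obtain ⟨hnorm, hre⟩ := hpos t ht
    positivity
  have hsq := hmono (left_mem_Icc.2 hab.le) (right_mem_Icc.2 hab.le) hab
  exact lt_of_pow_lt_pow_left₀ 2 (norm_nonneg _) hsq

lemma four_mul_le_sq_of_lt_neg_two_mul_sqrt {p q : ℝ} (h : p < -2 * √q) : 4 * q ≤ p ^ 2 := by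
  have hq : q ≤ √q ^ 2 := Real.sq_sqrt' (x := q) ▸ le_max_left q 0
  nlinarith [Real.sqrt_nonneg q]

lemma quadratic_pos_of_lt_or_gt_roots {p q x : ℝ} (hdisc : 4 * q ≤ p ^ 2)
    (hx : x < (-p - √(p ^ 2 - 4 * q)) / 2 ∨ (-p + √(p ^ 2 - 4 * q)) / 2 < x) :
    0 < q + p * x + x ^ 2 := by
  have hs := Real.sq_sqrt (sub_nonneg.2 hdisc)
  have hs₀ := Real.sqrt_nonneg (p ^ 2 - 4 * q)
  have hfactor : q + p * x + x ^ 2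
      = (x - (-p - √(p ^ 2 - 4 * q)) / 2) * (x - (-p + √(p ^ 2 - 4 * q)) / 2) := by
    linear_combination (1 / 4 : ℝ) * hs
  rw [hfactor]
  rcases hx with hx | hx
  · exact mul_pos_of_neg_of_neg (by linarith) (by linarith)
  · exact mul_pos (by linarith) (by linarith)

lemma bautin_field_eq_mul (β₁ β₂ : ℝ) (z : ℂ) :
    ((β₁ : ℂ) + I) * z + (β₂ : ℂ) * z * (‖z‖ : ℂ) ^ 2 + z * (‖z‖ : ℂ) ^ 4
      = z * (((β₁ + β₂ * ‖z‖ ^ 2 + (‖z‖ ^ 2) ^ 2 : ℝ) : ℂ) + I) := by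
  push_cast
  ring

theorem stmt_13_general (β₁ β₂ : ℝ) (hβ₂ : β₂ < -2 * Real.sqrt β₁)
    (ρ₁ ρ₂ : ℝ)
    (hρ₁ : ρ₁ = Real.sqrt ((-β₂ - Real.sqrt (β₂ ^ 2 - 4 * β₁)) / 2))
    (hρ₂ : ρ₂ = Real.sqrt ((-β₂ + Real.sqrt (β₂ ^ 2 - 4 * β₁)) / 2))
    (z : ℝ → ℂ)
    (hz : ∀ t : ℝ, HasDerivAt z
      (((β₁ : ℂ) + Complex.I) * z t
        + (β₂ : ℂ) * z t * ((‖z t‖ : ℂ)) ^ 2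
        + z t * ((‖z t‖ : ℂ)) ^ 4) t)
    (a b : ℝ) (hab : a < b) :
    ((∀ t ∈ Set.Icc a b, 0 < ‖z t‖ ∧ ‖z t‖ < ρ₁) →
        ‖z a‖ < ‖z b‖)
    ∧ ((∀ t ∈ Set.Icc a b, ρ₂ < ‖z t‖) →
        ‖z a‖ < ‖z b‖) := by
  have hdisc := four_mul_le_sq_of_lt_neg_two_mul_sqrt hβ₂
  have hz' t := bautin_field_eq_mul β₁ β₂ (z t) ▸ hz t
  have key (h : ∀ t ∈ Icc a b, 0 < ‖z t‖ ∧
      (‖z t‖ ^ 2 < (-β₂ - √(β₂ ^ 2 - 4 * β₁)) / 2 ∨ (-β₂ + √(β₂ ^ 2 - 4 * β₁)) / 2 < ‖z t‖ ^ 2)) :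
      ‖z a‖ < ‖z b‖ := by
    refine norm_lt_norm_of_hasDerivAt_mul hz' hab fun t ht => ?_
    obtain ⟨hnorm, hroots⟩ := h t (Ioo_subset_Icc_self ht)
    refine ⟨hnorm, ?_⟩
    simpa only [add_re, ofReal_re, I_re, add_zero] using
      quadratic_pos_of_lt_or_gt_roots hdisc hroots
  refine ⟨fun h => key fun t ht => ?_, fun h => key fun t ht => ?_⟩
  · obtain ⟨hnorm, hlt⟩ := h t ht
    exact ⟨hnorm, .inl ((Real.lt_sqrt hnorm.le).1 (hρ₁ ▸ hlt))⟩
  · have hnorm : 0 < ‖z t‖ := (hρ₂ ▸ Real.sqrt_nonneg _).trans_lt (h t ht)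
    exact ⟨hnorm, .inr ((Real.sqrt_lt' hnorm).1 (hρ₂ ▸ h t ht))⟩

/-- For `β₁ > 0`, `β₂ < −2√β₁`, the modulus of a solution of the Bautin
normal form `z′ = (β₁ + i)z + β₂ z|z|² + z|z|⁴` is strictly increasing both
inside the inner limit cycle (`0 < |z| < ρ₁`) and outside the outer one
(`|z| > ρ₂`). -/
theorem stmt_13 (β₁ β₂ : ℝ) (hβ₁ : 0 < β₁) (hβ₂ : β₂ < -2 * Real.sqrt β₁)
    (ρ₁ ρ₂ : ℝ)
    (hρ₁ : ρ₁ = Real.sqrt ((-β₂ - Real.sqrt (β₂ ^ 2 - 4 * β₁)) / 2))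
    (hρ₂ : ρ₂ = Real.sqrt ((-β₂ + Real.sqrt (β₂ ^ 2 - 4 * β₁)) / 2))
    (z : ℝ → ℂ)
    (hz : ∀ t : ℝ, HasDerivAt z
      (((β₁ : ℂ) + Complex.I) * z t
        + (β₂ : ℂ) * z t * ((‖z t‖ : ℂ)) ^ 2
        + z t * ((‖z t‖ : ℂ)) ^ 4) t)
    (a b : ℝ) (hab : a < b) :
    ((∀ t ∈ Set.Icc a b, 0 < ‖z t‖ ∧ ‖z t‖ < ρ₁) →
        ‖z a‖ < ‖z b‖)
    ∧ ((∀ t ∈ Set.Icc a b, ρ₂ < ‖z t‖) →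
        ‖z a‖ < ‖z b‖) :=
  stmt_13_general β₁ β₂ hβ₂ ρ₁ ρ₂ hρ₁ hρ₂ z hz a b hab
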